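/- arXiv:2510.21698 — 2 statements merged into one kernel-verified Lean document; each statement's English description precedes it below -/
import Mathlib

section
/- Let W ∈ ℝ^{4×4} be symmetric positive semidefinite, with indices labeled k, m, k', m' (i.e., 1,2,3,4). Then the Jabr inequality holds: (W_{km} + W_{k'm'})² + (W_{mk'} − W_{km'})² ≤ (W_{kk} + W_{k'k'})(W_{mm} + W_{m'm'}). -/
/-!
Write `W` as the Gram matrix of vectors `v_k, v_m, v_k', v_m'`. The inequality is then the
Cauchy–Schwarz inequality `|⟪z, w⟫|² ≤ ‖z‖² ‖w‖²` for the complex vectors `z = v_k + i v_k'` and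
`w = v_m + i v_m'`. Without complex scalars: for a positive semidefinite symmetric form `B`, the form
`((x, x'), (y, y')) ↦ B x y + B x' y'` on `M × M` is again one, and pairing `(e_k, e_k')` with
`(a e_m - b e_m', b e_m + a e_m')`, where `a + i b` is the complex inner product, yields
`S² ≤ (W_kk + W_k'k') · S · (W_mm + W_m'm')` for `S = a² + b²`.
-/

open Matrix

namespace LinearMap.BilinForm

variable {R M : Type*} [CommRing R] [LinearOrder R] [IsStrictOrderedRing R]
  [AddCommGroup M] [Module R M]

theorem sq_apply_add_apply_le (B : LinearMap.BilinForm R M) (hs : ∀ x, 0 ≤ B x x)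
    (hB : B.IsSymm) (x x' y y' : M) :
    (B x y + B x' y') ^ 2 ≤ (B x x + B x' x') * (B y y + B y' y') := by
  let C : LinearMap.BilinForm R (M × M) :=
    B.compl₁₂ (fst R M M) (fst R M M) + B.compl₁₂ (snd R M M) (snd R M M)
  have hC : LinearMap.IsSymm C := ⟨fun u v => by simp [C, hB.eq u.1, hB.eq u.2]⟩
  exact C.apply_sq_le_of_symm (fun u => add_nonneg (hs u.1) (hs u.2)) hC (x, x') (y, y')

end LinearMap.BilinForm

namespace Matrix.PosSemidef

variable {R n : Type*} [CommRing R] [StarRing R] [TrivialStar R] [Fintype n] [DecidableEq n]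

theorem toBilin'_self_nonneg [PartialOrder R] {W : Matrix n n R} (hW : W.PosSemidef)
    (x : n → R) : 0 ≤ W.toBilin' x x := by
  simpa [toBilin'_apply'] using hW.dotProduct_mulVec_nonneg x

theorem jabr [LinearOrder R] [IsStrictOrderedRing R] {W : Matrix n n R} (hW : W.PosSemidef)
    (k m k' m' : n) :
    (W k m + W k' m') ^ 2 + (W m k' - W k m') ^ 2 ≤ (W k k + W k' k') * (W m m + W m' m') := by
  have hsymm : W.IsSymm := isHermitian_iff_isSymm.mp hW.isHermitian
  set a := W k m + W k' m'
  set b := W m k' - W k m'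
  set B := W.toBilin'
  let e : n → n → R := fun i => Pi.single i 1
  have hx : B (e k) (e k) + B (e k') (e k') = W k k + W k' k' := by
    simp only [B, e, toBilin'_single]
  have hxy : B (e k) (a • e m - b • e m') + B (e k') (b • e m + a • e m') = a ^ 2 + b ^ 2 := by
    simp only [B, e, map_add, map_sub, map_smul, toBilin'_single, smul_eq_mul, hsymm.apply m k']
    ring
  have hy : B (a • e m - b • e m') (a • e m - b • e m')
      + B (b • e m + a • e m') (b • e m + a • e m')
      = (a ^ 2 + b ^ 2) * (W m m + W m' m') := by
    simp only [B, e, map_add, map_sub, map_smul, LinearMap.add_apply, LinearMap.sub_apply,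
      LinearMap.smul_apply, toBilin'_single, smul_eq_mul]
    ring
  have hcs := B.sq_apply_add_apply_le hW.toBilin'_self_nonneg
    (isSymm_toBilin'_iff_isSymm.mpr hsymm) (e k) (e k') (a • e m - b • e m') (b • e m + a • e m')
  rw [hx, hxy, hy, sq, mul_left_comm] at hcs
  rcases (add_nonneg (sq_nonneg a) (sq_nonneg b)).eq_or_lt with hS | hS
  · rw [← hS]
    exact mul_nonneg (add_nonneg hW.diag_nonneg hW.diag_nonneg)
      (add_nonneg hW.diag_nonneg hW.diag_nonneg)
  · exact le_of_mul_le_mul_left hcs hS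

end Matrix.PosSemidef

theorem jabr_inequality_general (W : Matrix (Fin 4) (Fin 4) ℝ)
    (hpsd : W.PosSemidef) :
    (W 0 1 + W 2 3) ^ 2 + (W 1 2 - W 0 3) ^ 2 ≤ (W 0 0 + W 2 2) * (W 1 1 + W 3 3) :=
  hpsd.jabr 0 1 2 3

/-- Jabr inequality from a PSD `4×4` matrix, with indices
`k = 0`, `m = 1`, `k' = 2`, `m' = 3`:
`(W_{km} + W_{k'm'})² + (W_{mk'} − W_{km'})² ≤ (W_{kk} + W_{k'k'})(W_{mm} + W_{m'm'})`. -/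
theorem jabr_inequality (W : Matrix (Fin 4) (Fin 4) ℝ)
    (hsymm : W.IsSymm) (hpsd : W.PosSemidef) :
    (W 0 1 + W 2 3) ^ 2 + (W 1 2 - W 0 3) ^ 2 ≤ (W 0 0 + W 2 2) * (W 1 1 + W 3 3) :=
  jabr_inequality_general W hpsd
end

section
/- Let W ∈ ℝ^{4×4} be symmetric positive semidefinite with indices {k,m,k',m'}, and let σ be any permutation of {k,m,k',m'}. Then the permuted Jabr inequality holds: (W_{σ(k)σ(m)} + W_{σ(k')σ(m')})² + (W_{σ(k)σ(m')} − W_{σ(m)σ(k')})² ≤ (W_{σ(k)σ(k)} + W_{σ(k')σ(k')})(W_{σ(m)σ(m)} + W_{σ(m')σ(m')}). -/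
/-!
A positive semidefinite matrix is the Gram matrix of vectors `vᵢ`, and the inequality is then
Cauchy–Schwarz `|⟪z, z'⟫|² ≤ ‖z‖² ‖z'‖²` for `z = v_k + i v_{k'}`, `z' = v_m + i v_{m'}` in the
complexification. We stay over `ℝ`: with `a + ib = ⟪z, z'⟫`, multiplying `z` by `a - ib` turns
`a² + b²` into the real inner product in `E × E` of `(a v_k - b v_{k'}, b v_k + a v_{k'})` and
`(v_m, v_{m'})`.
-/

open scoped InnerProductSpace MatrixOrder ComplexOrder

theorem Matrix.PosSemidef.exists_eq_gram {𝕜 n : Type*} [RCLike 𝕜] [Fintype n]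
    {A : Matrix n n 𝕜} (hA : A.PosSemidef) :
    ∃ v : n → EuclideanSpace 𝕜 n, A = gram 𝕜 v := by
  classical
  obtain ⟨B, rfl⟩ := CStarAlgebra.nonneg_iff_eq_star_mul_self.mp hA.nonneg
  refine ⟨fun j ↦ WithLp.toLp 2 fun k ↦ B k j, ?_⟩
  ext i j
  simp [mul_apply, EuclideanSpace.inner_eq_star_dotProduct, dotProduct, mul_comm]

theorem real_inner_add_inner_sq_add_inner_sub_inner_sq_le {E : Type*} [NormedAddCommGroup E]
    [InnerProductSpace ℝ E] (u v w x : E) :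
    (⟪u, v⟫_ℝ + ⟪w, x⟫_ℝ) ^ 2 + (⟪u, x⟫_ℝ - ⟪v, w⟫_ℝ) ^ 2 ≤
      (⟪u, u⟫_ℝ + ⟪w, w⟫_ℝ) * (⟪v, v⟫_ℝ + ⟪x, x⟫_ℝ) := by
  set a := ⟪u, v⟫_ℝ + ⟪w, x⟫_ℝ
  set b := ⟪u, x⟫_ℝ - ⟪v, w⟫_ℝ
  let p : WithLp 2 (E × E) := WithLp.toLp 2 (a • u - b • w, b • u + a • w)
  let q : WithLp 2 (E × E) := WithLp.toLp 2 (v, x)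
  have hpq : ⟪p, q⟫_ℝ = a ^ 2 + b ^ 2 := by
    simp only [p, q, WithLp.prod_inner_apply, inner_add_left, inner_sub_left, inner_smul_left]
    simp only [a, b, real_inner_comm w v, RCLike.conj_to_real]
    ring
  have hpp : ⟪p, p⟫_ℝ = (a ^ 2 + b ^ 2) * (⟪u, u⟫_ℝ + ⟪w, w⟫_ℝ) := by
    simp only [p, WithLp.prod_inner_apply, inner_add_left, inner_sub_left, inner_smul_left,
      inner_add_right, inner_sub_right, inner_smul_right, real_inner_comm w u, RCLike.conj_to_real]
    ring
  have hqq : ⟪q, q⟫_ℝ = ⟪v, v⟫_ℝ + ⟪x, x⟫_ℝ := WithLp.prod_inner_apply q q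
  have hcs := real_inner_mul_inner_self_le p q
  rw [hpq, hpp, hqq] at hcs
  have huw : 0 ≤ ⟪u, u⟫_ℝ + ⟪w, w⟫_ℝ := add_nonneg real_inner_self_nonneg real_inner_self_nonneg
  have hvx : 0 ≤ ⟪v, v⟫_ℝ + ⟪x, x⟫_ℝ := add_nonneg real_inner_self_nonneg real_inner_self_nonneg
  nlinarith [mul_nonneg huw hvx]

theorem Matrix.PosSemidef.jabr_inequality {n : Type*} [Fintype n] {W : Matrix n n ℝ}
    (hW : W.PosSemidef) (k m k' m' : n) :
    (W k m + W k' m') ^ 2 + (W k m' - W m k') ^ 2 ≤ (W k k + W k' k') * (W m m + W m' m') := by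
  obtain ⟨v, rfl⟩ := hW.exists_eq_gram
  exact real_inner_add_inner_sq_add_inner_sub_inner_sq_le (v k) (v m) (v k') (v m')

theorem permuted_jabr_inequality_general (W : Matrix (Fin 4) (Fin 4) ℝ)
    (hpsd : W.PosSemidef) (σ : Equiv.Perm (Fin 4)) :
    (W (σ 0) (σ 1) + W (σ 2) (σ 3)) ^ 2 + (W (σ 0) (σ 3) - W (σ 1) (σ 2)) ^ 2 ≤
      (W (σ 0) (σ 0) + W (σ 2) (σ 2)) * (W (σ 1) (σ 1) + W (σ 3) (σ 3)) :=
  hpsd.jabr_inequality (σ 0) (σ 1) (σ 2) (σ 3)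

/-- Permuted Jabr inequalities: for any permutation `σ` of the index set
`{k, m, k', m'} = {0, 1, 2, 3}` of a real symmetric PSD `4×4` matrix `W`,
`(W_{σ(k)σ(m)} + W_{σ(k')σ(m')})² + (W_{σ(k)σ(m')} − W_{σ(m)σ(k')})²
  ≤ (W_{σ(k)σ(k)} + W_{σ(k')σ(k')})(W_{σ(m)σ(m)} + W_{σ(m')σ(m')})`. -/
theorem permuted_jabr_inequality (W : Matrix (Fin 4) (Fin 4) ℝ)
    (hsymm : W.IsSymm) (hpsd : W.PosSemidef) (σ : Equiv.Perm (Fin 4)) :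
    (W (σ 0) (σ 1) + W (σ 2) (σ 3)) ^ 2 + (W (σ 0) (σ 3) - W (σ 1) (σ 2)) ^ 2 ≤
      (W (σ 0) (σ 0) + W (σ 2) (σ 2)) * (W (σ 1) (σ 1) + W (σ 3) (σ 3)) :=
  permuted_jabr_inequality_general W hpsd σ
end
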